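/- arXiv:0910.4016 — 2 statements merged into one kernel-verified Lean document; each statement's English description precedes it below -/
import Mathlib

section
/- Let f : M → M be a map and let (U_n)_{n≥1} be a concatenated collection of subsets of M. Fix x ∈ M and N ∈ ℕ, and suppose that sup{ u(y) : y ∈ ⋃_{n≥1} U_n and x ∈ C(y) } ≤ N. Then for every n ≥ 1, every z ∈ f^{−n}(x) belongs to U_n ∪ U_{n+1} ∪ … ∪ U_{n+N}. -/
open Function

/-
Strong induction on `n`, with `u = u(z)`. If `u < n`, then `f^u(z)` is an `(n - u)`-th preimage
of `x`, and concatenation carries its bound back to `z`. Otherwise `z ∈ U_u` already, and if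
`u > n` then `x = f^n(z)` lies on the chain `C(z)`, so `u ≤ N`.
-/

/-- For `x` in `⋃_{n ≥ 1} U_n`, `u x` is the least `n ≥ 1` with `x ∈ U n`
(and `u x = 0` if there is no such `n`). -/
noncomputable def chainIndex {M : Type*} (U : ℕ → Set M) (x : M) : ℕ :=
  sInf {n : ℕ | 1 ≤ n ∧ x ∈ U n}

theorem chainIndex_spec {M : Type*} {U : ℕ → Set M} {y : M} (hy : ∃ n, 1 ≤ n ∧ y ∈ U n) :
    1 ≤ chainIndex U y ∧ y ∈ U (chainIndex U y) :=
  Nat.sInf_mem hy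

/-- Lemma 2: if every chain containing `x` has length at most `N`, then every `n`-th
preimage of `x` lies in `U_n ∪ U_{n+1} ∪ ⋯ ∪ U_{n+N}`. Here `x ∈ C(y)` is expressed as
`∃ j < u(y), f^[j] y = x`, and every point of the backward orbit of `x` is assumed to lie
in `⋃_{n ≥ 1} U_n`. -/
theorem preimages_in_union_of_bounded_chains {M : Type*} (f : M → M)
    (U : ℕ → Set M)
    (hconc : ∀ n m, 1 ≤ n → 1 ≤ m → ∀ x, x ∈ U n → f^[n] x ∈ U m → x ∈ U (n + m))
    (x : M) (N : ℕ)
    (hcov : ∀ z : M, ∀ n : ℕ, 1 ≤ n → f^[n] z = x → ∃ m, 1 ≤ m ∧ z ∈ U m)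
    (hbound : ∀ y : M, (∃ n, 1 ≤ n ∧ y ∈ U n) →
      (∃ j < chainIndex U y, f^[j] y = x) → chainIndex U y ≤ N) :
    ∀ n : ℕ, 1 ≤ n → ∀ z : M, f^[n] z = x →
      ∃ m, n ≤ m ∧ m ≤ n + N ∧ z ∈ U m := by
  intro n
  induction n using Nat.strong_induction_on with
  | _ n ih =>
    intro hn z hz
    have hcovered := hcov z n hn hz
    obtain ⟨hu_pos, hzu⟩ := chainIndex_spec hcovered
    set u := chainIndex U z
    rcases lt_or_ge u n with hun | hnu
    · have hrest : f^[n - u] (f^[u] z) = x := by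
        rw [← iterate_add_apply, Nat.sub_add_cancel hun.le, hz]
      obtain ⟨m, hnm, hmN, hm⟩ := ih (n - u) (by omega) (by omega) _ hrest
      exact ⟨u + m, by omega, by omega, hconc u m hu_pos (by omega) z hzu hm⟩
    · refine ⟨u, hnu, ?_, hzu⟩
      rcases hnu.eq_or_lt with rfl | hnlt
      · omega
      · have := hbound z hcovered ⟨n, hnlt, hz⟩
        omega
end

section
/- Let f : M → M be a map with finite fibers (f^{−i}(x) is a finite set for every x and i), and let (U_n)_{n≥1} be a concatenated collection of subsets of M with associated function u and chains C(·). Suppose x ∈ M is contained in infinitely many distinct chains C_j = {y_j, f(y_j), …, f^{s_j−1}(y_j)}, j ≥ 1, with s_j = u(y_j) → ∞, and write x = f^{r_j}(y_j) with 0 ≤ r_j < s_j. Then r_j → ∞ as j → ∞, and consequently x ∈ ⋃_{n≥k} ⋃_{j=0}^{n−1} f^j(u^{−1}(n)) for every k ≥ 1. -/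
/-!
Only finitely many points reach `x` in fewer than `B` steps of `f`, and `u` is bounded on them;
since `u (y j) → ∞`, eventually `y j` is not among them, i.e. `r j ≥ B`.
-/

open Set Function Filter

theorem Filter.Tendsto.cofinite_of_comp_atTop {ι M β : Type*} [Preorder β]
    [NoMaxOrder β] {l : Filter ι} {y : ι → M} (φ : M → β) (h : Tendsto (φ ∘ y) l atTop) :
    Tendsto y l cofinite := by
  intro S hS
  rw [mem_map]
  filter_upwards [(mem_cofinite.1 hS).eventually_all.2 fun z _ => h.eventually_gt_atTop (φ z)] with j hj
  by_contra hmem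
  exact lt_irrefl _ (hj (y j) hmem)

theorem Function.tendsto_atTop_of_iterate_apply_eq {ι M : Type*} {f : M → M} {x : M}
    (hfib : ∀ i, (f^[i] ⁻¹' {x}).Finite) {l : Filter ι} {y : ι → M} {r : ι → ℕ}
    (hy : Tendsto y l cofinite) (hx : ∀ j, f^[r j] (y j) = x) : Tendsto r l atTop := by
  rw [tendsto_atTop]
  intro B
  have hfin : (⋃ i ∈ Iio B, f^[i] ⁻¹' {x}).Finite := (finite_Iio B).biUnion fun i _ => hfib i
  filter_upwards [hy hfin.compl_mem_cofinite] with j hj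
  by_contra! hrB
  exact hj (mem_biUnion hrB (hx j))

theorem infinitely_many_chains_mem_tail_general {M : Type*} (f : M → M)
    (hfib : ∀ (x : M) (i : ℕ), (f^[i] ⁻¹' {x}).Finite)
    (U : ℕ → Set M)
    (x : M) (y : ℕ → M) (r s : ℕ → ℕ)
    (hs : ∀ j, s j = chainIndex U (y j))
    (hs_top : Tendsto s atTop atTop)
    (hr : ∀ j, r j < s j)
    (hx : ∀ j, f^[r j] (y j) = x) :
    Tendsto r atTop atTop ∧
      ∀ k : ℕ, 1 ≤ k →
        x ∈ ⋃ n ∈ {n : ℕ | k ≤ n}, ⋃ j ∈ Finset.range n,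
          f^[j] '' {z | chainIndex U z = n} := by
  refine ⟨tendsto_atTop_of_iterate_apply_eq (hfib x)
    ((hs_top.congr hs).cofinite_of_comp_atTop (chainIndex U)) hx, fun k _ => ?_⟩
  obtain ⟨j, hj⟩ := (hs_top.eventually_ge_atTop k).exists
  exact mem_biUnion (show k ≤ s j from hj) <|
    mem_biUnion (Finset.mem_range.2 (hr j)) ⟨y j, (hs j).symm, hx j⟩

/-- If a point `x` is contained in infinitely many chains `C_j` generated by points `y_j`
with lengths `s_j = u(y_j) → ∞`, say `x = f^{r_j}(y_j)` with `r_j < s_j`, then `r_j → ∞`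
and consequently `x ∈ ⋃_{n ≥ k} ⋃_{0 ≤ j < n} f^j(u⁻¹(n))` for every `k ≥ 1`. -/
theorem infinitely_many_chains_mem_tail {M : Type*} (f : M → M)
    (hfib : ∀ (x : M) (i : ℕ), (f^[i] ⁻¹' {x}).Finite)
    (U : ℕ → Set M)
    (hconc : ∀ n m, 1 ≤ n → 1 ≤ m → ∀ x, x ∈ U n → f^[n] x ∈ U m → x ∈ U (n + m))
    (x : M) (y : ℕ → M) (r s : ℕ → ℕ)
    (hyU : ∀ j, ∃ n, 1 ≤ n ∧ y j ∈ U n)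
    (hs : ∀ j, s j = chainIndex U (y j))
    (hs_top : Tendsto s atTop atTop)
    (hr : ∀ j, r j < s j)
    (hx : ∀ j, f^[r j] (y j) = x) :
    Tendsto r atTop atTop ∧
      ∀ k : ℕ, 1 ≤ k →
        x ∈ ⋃ n ∈ {n : ℕ | k ≤ n}, ⋃ j ∈ Finset.range n,
          f^[j] '' {z | chainIndex U z = n} :=
  infinitely_many_chains_mem_tail_general f hfib U x y r s hs hs_top hr hx
end
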